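/- Under the recursively feasible MPC scheme with terminal invariant set, the closed-loop trajectory satisfies the constraints C Δx_t + D Δδ_t ≤ b at every time step t ≥ 0, provided the problem is feasible at t = 0, all disturbances lie in 𝕎, and θ_a ∈ Θ_t for all t. -/

import Mathlib

/-- Predicted trajectory of the closed-loop prediction model. -/
def predTraj {n m p : ℕ}
    (Acl : Matrix (Fin n) (Fin n) ℝ) (B₁ : Matrix (Fin n) (Fin m) ℝ)
    (E : Matrix (Fin n) (Fin p) ℝ)
    (x0 : Fin n → ℝ) (v : ℕ → Fin m → ℝ) (w : ℕ → Fin n → ℝ)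
    (θ : ℕ → Fin p → ℝ) : ℕ → Fin n → ℝ
  | 0 => x0
  | k+1 => Acl.mulVec (predTraj Acl B₁ E x0 v w θ k) + B₁.mulVec (v k)
      + E.mulVec (θ k) + w k

/-- Feasibility of the robust MPC problem. -/
def Feasible {n m p s : ℕ} (N : ℕ)
    (Acl : Matrix (Fin n) (Fin n) ℝ) (B₁ : Matrix (Fin n) (Fin m) ℝ)
    (E : Matrix (Fin n) (Fin p) ℝ) (K : Matrix (Fin m) (Fin n) ℝ)
    (C : Matrix (Fin s) (Fin n) ℝ) (D : Matrix (Fin s) (Fin m) ℝ) (b : Fin s → ℝ)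
    (W : Set (Fin n → ℝ)) (Θ : Set (Fin p → ℝ)) (Xf : Set (Fin n → ℝ))
    (x0 : Fin n → ℝ) (v : ℕ → Fin m → ℝ) : Prop :=
  ∀ (w : ℕ → Fin n → ℝ) (θ : ℕ → Fin p → ℝ),
    (∀ k, w k ∈ W) → (∀ k, θ k ∈ Θ) →
    (∀ k < N, C.mulVec (predTraj Acl B₁ E x0 v w θ k)
        + D.mulVec (-K.mulVec (predTraj Acl B₁ E x0 v w θ k) + v k) ≤ b) ∧
    predTraj Acl B₁ E x0 v w θ N ∈ Xf

/-!
Recursive feasibility: if `vs` solves the robust problem at time `t`, then the shifted input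
sequence, completed by `0` (pure feedback `-K x` inside the terminal set), solves it at time
`t + 1`. The realized disturbance and parameter are admissible realizations of the prediction,
so the predicted trajectory of the shifted input from `x (t+1)` is the tail of a predicted
trajectory from `x t`, and its one extra final state is an invariant step away from the old
terminal state, hence lies in the (growing) terminal set.
Since the problem stays feasible, the first predicted constraint, which is the constraint of the
applied input, holds at every time.
-/

open Matrix

theorem Matrix.mulVec_add_mulVec_neg_mulVec_add {l m n R : Type*} [Fintype m] [Fintype n]
    [Ring R] (M : Matrix l n R) (G : Matrix l m R) (K : Matrix m n R) (x : n → R) (u : m → R) :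
    M *ᵥ x + G *ᵥ (-(K *ᵥ x) + u) = (M - G * K) *ᵥ x + G *ᵥ u := by
  simp only [sub_mulVec, mulVec_add, mulVec_neg, ← mulVec_mulVec]
  abel

section PredTraj

variable {n m p : ℕ} (Acl : Matrix (Fin n) (Fin n) ℝ) (B₁ : Matrix (Fin n) (Fin m) ℝ)
  (E : Matrix (Fin n) (Fin p) ℝ)

theorem predTraj_succ_eq_predTraj_tail (x0 : Fin n → ℝ) (v : ℕ → Fin m → ℝ)
    (w : ℕ → Fin n → ℝ) (θ : ℕ → Fin p → ℝ) (k : ℕ) :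
    predTraj Acl B₁ E x0 v w θ (k + 1) =
      predTraj Acl B₁ E (predTraj Acl B₁ E x0 v w θ 1)
        (fun i => v (i + 1)) (fun i => w (i + 1)) (fun i => θ (i + 1)) k := by
  induction k with
  | zero => rfl
  | succ k ih => rw [predTraj, ih]; rfl

theorem predTraj_congr_input {x0 : Fin n → ℝ} {v v' : ℕ → Fin m → ℝ}
    {w : ℕ → Fin n → ℝ} {θ : ℕ → Fin p → ℝ} {k : ℕ} (h : ∀ i < k, v i = v' i) :
    predTraj Acl B₁ E x0 v w θ k = predTraj Acl B₁ E x0 v' w θ k := by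
  induction k with
  | zero => rfl
  | succ k ih =>
    rw [predTraj, predTraj, ih fun i hi => h i (hi.trans k.lt_succ_self), h k k.lt_succ_self]

end PredTraj

def shiftedInput {α : Type*} [Zero α] (N : ℕ) (vs : ℕ → α) (k : ℕ) : α :=
  if k + 1 < N then vs (k + 1) else 0

namespace Feasible

variable {n m p s : ℕ} {N : ℕ}
  {Acl : Matrix (Fin n) (Fin n) ℝ} {B₁ : Matrix (Fin n) (Fin m) ℝ}
  {E : Matrix (Fin n) (Fin p) ℝ} {K : Matrix (Fin m) (Fin n) ℝ}
  {C : Matrix (Fin s) (Fin n) ℝ} {D : Matrix (Fin s) (Fin m) ℝ} {b : Fin s → ℝ}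
  {W : Set (Fin n → ℝ)} {Θ : Set (Fin p → ℝ)} {Xf : Set (Fin n → ℝ)}
  {x0 : Fin n → ℝ} {vs : ℕ → Fin m → ℝ}

theorem constraint_zero (h : Feasible N Acl B₁ E K C D b W Θ Xf x0 vs) (hN : 1 ≤ N)
    {w0 : Fin n → ℝ} (hw0 : w0 ∈ W) {θ0 : Fin p → ℝ} (hθ0 : θ0 ∈ Θ) :
    C *ᵥ x0 + D *ᵥ (-(K *ᵥ x0) + vs 0) ≤ b :=
  (h (fun _ => w0) (fun _ => θ0) (fun _ => hw0) (fun _ => hθ0)).1 0 hN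

theorem shift (h : Feasible N Acl B₁ E K C D b W Θ Xf x0 vs) (hN : 1 ≤ N)
    {Θ' : Set (Fin p → ℝ)} {Xf' : Set (Fin n → ℝ)} (hΘ : Θ' ⊆ Θ)
    (hstep : ∀ x ∈ Xf, ∀ w ∈ W, ∀ θ ∈ Θ', Acl *ᵥ x + w + E *ᵥ θ ∈ Xf')
    (hXf : ∀ x ∈ Xf, (C - D * K) *ᵥ x ≤ b)
    {w0 : Fin n → ℝ} (hw0 : w0 ∈ W) {θ0 : Fin p → ℝ} (hθ0 : θ0 ∈ Θ) :
    Feasible N Acl B₁ E K C D b W Θ' Xf' (Acl *ᵥ x0 + B₁ *ᵥ vs 0 + E *ᵥ θ0 + w0)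
      (shiftedInput N vs) := by
  intro w θ hw hθ
  let wPrev : ℕ → Fin n → ℝ := fun | 0 => w0 | k + 1 => w k
  let θPrev : ℕ → Fin p → ℝ := fun | 0 => θ0 | k + 1 => θ k
  obtain ⟨hcon, hterm⟩ := h wPrev θPrev
    (fun | 0 => hw0 | k + 1 => hw k) (fun | 0 => hθ0 | k + 1 => hΘ (hθ k))
  set traj := predTraj Acl B₁ E (Acl *ᵥ x0 + B₁ *ᵥ vs 0 + E *ᵥ θ0 + w0) (shiftedInput N vs) w θ
  have htail : ∀ k < N, traj k = predTraj Acl B₁ E x0 vs wPrev θPrev (k + 1) := fun k hk => by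
    rw [predTraj_succ_eq_predTraj_tail]
    exact predTraj_congr_input _ _ _ fun i hi => if_pos (by omega)
  obtain ⟨N, rfl⟩ : ∃ N', N = N' + 1 := ⟨N - 1, by omega⟩
  have hlast : traj N ∈ Xf := htail N N.lt_succ_self ▸ hterm
  refine ⟨fun k hk => ?_, ?_⟩
  · rcases Nat.lt_succ_iff_lt_or_eq.mp hk with hk | rfl
    · rw [htail k (by omega), shiftedInput, if_pos (by omega)]
      exact hcon (k + 1) (by omega)
    · rw [shiftedInput, if_neg (by omega), mulVec_add_mulVec_neg_mulVec_add, mulVec_zero,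
        add_zero]
      exact hXf _ hlast
  · change Acl *ᵥ traj N + B₁ *ᵥ shiftedInput (N + 1) vs N + E *ᵥ θ N + w N ∈ Xf'
    rw [shiftedInput, if_neg (by omega), mulVec_zero, add_zero, add_right_comm]
    exact hstep _ hlast _ (hw N) _ (hθ N)

end Feasible

/-- Closed-loop constraint satisfaction at every time step of the recursively
feasible adaptive robust MPC scheme. -/
theorem mpc_closed_loop_constraints {n m p s : ℕ} (N : ℕ) (hN : 1 ≤ N)
    (A : Matrix (Fin n) (Fin n) ℝ) (B₁ : Matrix (Fin n) (Fin m) ℝ)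
    (E : Matrix (Fin n) (Fin p) ℝ) (K : Matrix (Fin m) (Fin n) ℝ)
    (C : Matrix (Fin s) (Fin n) ℝ) (D : Matrix (Fin s) (Fin m) ℝ) (b : Fin s → ℝ)
    (Acl : Matrix (Fin n) (Fin n) ℝ) (hAcl : Acl = A - B₁ * K)
    (W : Set (Fin n → ℝ)) (Θ : ℕ → Set (Fin p → ℝ))
    (X : ℕ → Set (Fin n → ℝ))
    (hΘnest : ∀ t, Θ (t+1) ⊆ Θ t)
    (hXnest : ∀ t, X t ⊆ X (t+1))
    (hinv : ∀ t, ∀ x ∈ X t, ∀ w ∈ W, ∀ θ ∈ Θ t, Acl.mulVec x + w + E.mulVec θ ∈ X t)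
    (hXcon : ∀ t, ∀ x ∈ X t, (C - D * K).mulVec x ≤ b)
    (x : ℕ → Fin n → ℝ) (v : ℕ → Fin m → ℝ) (w : ℕ → Fin n → ℝ) (θa : Fin p → ℝ)
    (hw : ∀ t, w t ∈ W) (hθa : ∀ t, θa ∈ Θ t)
    -- closed-loop dynamics with applied input Δδ_t = -K x_t + v_t:
    (hdyn : ∀ t, x (t+1) = A.mulVec (x t)
        + B₁.mulVec (-K.mulVec (x t) + v t) + E.mulVec θa + w t)
    -- the MPC problem is feasible at t = 0:
    (hfeas0 : ∃ vs, Feasible N Acl B₁ E K C D b W (Θ 0) (X 0) (x 0) vs)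
    -- v_t is the first element of some feasible solution at time t, whenever one exists:
    (hsel : ∀ t, (∃ vs, Feasible N Acl B₁ E K C D b W (Θ t) (X t) (x t) vs) →
      ∃ vs, Feasible N Acl B₁ E K C D b W (Θ t) (X t) (x t) vs ∧ vs 0 = v t) :
    ∀ t, C.mulVec (x t) + D.mulVec (-K.mulVec (x t) + v t) ≤ b := by
  have hfeas : ∀ t, ∃ vs, Feasible N Acl B₁ E K C D b W (Θ t) (X t) (x t) vs := by
    intro t
    induction t with
    | zero => exact hfeas0
    | succ t ih =>
      obtain ⟨vs, hvs, hvs0⟩ := hsel t ih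
      refine ⟨shiftedInput N vs, ?_⟩
      rw [hdyn, mulVec_add_mulVec_neg_mulVec_add, ← hAcl, ← hvs0]
      exact hvs.shift hN (hΘnest t)
        (fun x hx w hw θ hθ => hXnest t (hinv t x hx w hw θ (hΘnest t hθ))) (hXcon t)
        (hw t) (hθa t)
  intro t
  obtain ⟨vs, hvs, hvs0⟩ := hsel t (hfeas t)
  exact hvs0 ▸ hvs.constraint_zero hN (hw t) (hθa t)
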